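/- Let d ≥ 1. The coefficient of the word 1122⋯dd (the concatenation of the blocks ii for i = 1,…,d) in inv(t_{1,d}) ⧢ inv(t_{1,d}) equals 2^d, and the coefficient of the same word in det_⧢(W_d) equals 1. -/

import Mathlib

/-!
Expanding bilinearly, the coefficient of `w = 1122⋯dd` is a signed count of the ways `w` arises
as a shuffle of `σ(1)⋯σ(d)` and `τ(1)⋯τ(d)` (in `inv ⧢ inv`), respectively of the two-letter
words `σ(i)i` (in `det_⧢ W_d`). Each of these words is then a subword of `w`, which is weakly
increasing; so `σ` and `τ` are monotone, respectively `σ(i) ≤ i` for all `i`, and only the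
identity survives. For it, each block `ii` of `w` takes one letter from each copy of `12⋯d`, in
one of two orders, giving `2^d`, while `11 ⧢ 22 ⧢ ⋯ ⧢ dd` contains `w` exactly once.
-/

open scoped BigOperators

namespace ShufflePaper

variable {α : Type*}

/-- All shuffles (interleavings) of two words, with multiplicity. -/
def shuffles : List α → List α → Multiset (List α)
  | [], ys => {ys}
  | x :: xs, [] => {x :: xs}
  | x :: xs, y :: ys =>
      ((shuffles xs (y :: ys)).map (x :: ·)) + ((shuffles (x :: xs) ys).map (y :: ·))
  termination_by l₁ l₂ => l₁.length + l₂.length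

/-- The element of the shuffle algebra corresponding to a multiset of words. -/
noncomputable def ofMS (m : Multiset (List α)) : List α →₀ ℝ :=
  (m.map fun l => Finsupp.single l (1 : ℝ)).sum

/-- The shuffle product on the shuffle algebra `T(ℝ^d)` (bilinear extension). -/
noncomputable def sh (x y : List α →₀ ℝ) : List α →₀ ℝ :=
  x.sum fun v a => y.sum fun w b => (a * b) • ofMS (shuffles v w)

/-- Iterated shuffle product of a list of elements (empty word is the unit). -/
noncomputable def shProd : List (List α →₀ ℝ) → (List α →₀ ℝ)
  | [] => Finsupp.single [] 1
  | x :: xs => sh x (shProd xs)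

/-- Determinant in the commutative ring `(T(ℝ^d), ⧢)` via the Leibniz formula. -/
noncomputable def detSh {n : ℕ} (M : Fin n → Fin n → (List α →₀ ℝ)) : List α →₀ ℝ :=
  ∑ σ : Equiv.Perm (Fin n), (Equiv.Perm.sign σ : ℤ) •
    shProd ((List.finRange n).map fun i => M (σ i) i)

/-- The matrix `W_d` whose `(i,j)` entry is the two-letter word `ij`. -/
noncomputable def W (d : ℕ) : Fin d → Fin d → (List (Fin d) →₀ ℝ) :=
  fun i j => Finsupp.single [i, j] 1

/-- `inv(t_{1,d}) = Σ_σ sign(σ) σ(1)⋯σ(d)`. -/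
noncomputable def invT1 (d : ℕ) : List (Fin d) →₀ ℝ :=
  ∑ σ : Equiv.Perm (Fin d), (Equiv.Perm.sign σ : ℤ) •
    Finsupp.single ((List.finRange d).map σ) 1

/-- `inv(t_{2,d}) = Σ_{σ,τ} sign(σ)sign(τ) σ(1)τ(1)⋯σ(d)τ(d)`. -/
noncomputable def invT2 (d : ℕ) : List (Fin d) →₀ ℝ :=
  ∑ σ : Equiv.Perm (Fin d), ∑ τ : Equiv.Perm (Fin d),
    ((Equiv.Perm.sign σ : ℤ) * (Equiv.Perm.sign τ : ℤ)) •
      Finsupp.single ((List.finRange d).flatMap fun i => [σ i, τ i]) 1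

/- Right half-shuffle of two words: `u ≻ (v·i) = (u ⧢ v)·i`; zero if the
second word is empty. -/
open Classical in
noncomputable def hsW (u w : List α) : List α →₀ ℝ :=
  if h : w = [] then 0
  else ofMS ((shuffles u w.dropLast).map fun l => l ++ [w.getLast h])

/-- Right half-shuffle product (bilinear extension). -/
noncomputable def hs (x y : List α →₀ ℝ) : List α →₀ ℝ :=
  x.sum fun v a => y.sum fun w b => (a * b) • hsW v w

/-- Iterated right half-shuffle of a list of words, bracketed from the left. -/
noncomputable def hsList : List (List α) → (List α →₀ ℝ)
  | [] => 0
  | w :: ws => ws.foldl (fun acc u => hs acc (Finsupp.single u 1)) (Finsupp.single w 1)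

/-- Action of `σ ∈ S_n` on the span of words, permuting letter positions of
words of length `n` (letter in position `σ(k)` of `σ·w` is `w_k`); words of
other lengths are left untouched. -/
noncomputable def permAct {d : ℕ} (n : ℕ) (σ : Equiv.Perm (Fin n))
    (x : List (Fin d) →₀ ℝ) : List (Fin d) →₀ ℝ :=
  x.sum fun w a =>
    if h : w.length = n then
      Finsupp.single (List.ofFn fun p : Fin n => w.get (Fin.cast h.symm (σ⁻¹ p))) a
    else Finsupp.single w a

/-- The subgroup `H ≤ S_{2d}` generated by the transpositions `(2i−1, 2i+1)` and
`(2i, 2i+2)`, `1 ≤ i ≤ d−1` (0-indexed: all swaps `(k, k+2)` with `k+2 < 2d`). -/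
def Hgrp (d : ℕ) : Subgroup (Equiv.Perm (Fin (2 * d))) :=
  Subgroup.closure
    {g | ∃ k : ℕ, ∃ hk : k + 2 < 2 * d, g = Equiv.swap ⟨k, by omega⟩ ⟨k + 2, hk⟩}

/-- Pfaffian in the shuffle algebra, via the sum over permutations. -/
noncomputable def pfSh {n : ℕ} (A : Fin n → Fin n → (List α →₀ ℝ)) : List α →₀ ℝ :=
  ((2 ^ (n / 2) * (n / 2).factorial : ℝ))⁻¹ •
    ∑ π : Equiv.Perm (Fin n), (Equiv.Perm.sign π : ℤ) •
      shProd ((List.finRange (n / 2)).map fun i : Fin (n / 2) =>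
        A (π ⟨2 * (i : ℕ), by have := i.isLt; omega⟩)
          (π ⟨2 * (i : ℕ) + 1, by have := i.isLt; omega⟩))

/-- The matrix `Z_d` from de Bruijn's formula, odd case. -/
noncomputable def Z (d : ℕ) : Fin (d + 1) → Fin (d + 1) → (List (Fin d) →₀ ℝ) :=
  fun i j =>
    if hi : (i : ℕ) < d then
      if hj : (j : ℕ) < d then
        Finsupp.single [⟨i, hi⟩, ⟨j, hj⟩] 1 - Finsupp.single [⟨j, hj⟩, ⟨i, hi⟩] 1
      else Finsupp.single [⟨i, hi⟩] 1
    else if hj : (j : ℕ) < d then -Finsupp.single [⟨j, hj⟩] 1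
    else 0

section Shuffles

theorem shuffles_nil_left (v : List α) : shuffles [] v = {v} := by
  rw [shuffles]

theorem shuffles_nil_right (u : List α) : shuffles u [] = {u} := by
  cases u <;> rw [shuffles]

theorem sublist_sublist_perm_of_mem_shuffles {l u v : List α} (h : l ∈ shuffles u v) :
    u.Sublist l ∧ v.Sublist l ∧ l.Perm (u ++ v) := by
  induction u, v using shuffles.induct generalizing l with
  | case1 v => simp_all [shuffles_nil_left]
  | case2 a u => simp_all [shuffles_nil_right]
  | case3 a u b v ih₁ ih₂ =>
    rw [shuffles] at h
    simp only [Multiset.mem_add, Multiset.mem_map] at h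
    rcases h with ⟨l, hl, rfl⟩ | ⟨l, hl, rfl⟩
    · obtain ⟨hu, hv, hp⟩ := ih₁ hl
      exact ⟨hu.cons_cons a, hv.cons a, hp.cons a⟩
    · obtain ⟨hu, hv, hp⟩ := ih₂ hl
      exact ⟨hu.cons b, hv.cons_cons b, (hp.cons b).trans List.perm_middle.symm⟩

variable [DecidableEq α]

theorem count_cons_map_cons (a : α) (m : Multiset (List α)) (w : List α) :
    (m.map (a :: ·)).count (a :: w) = m.count w :=
  Multiset.count_map_eq_count' _ _ List.cons_injective _

theorem count_cons_map_cons_of_ne {a b : α} (h : b ≠ a) (m : Multiset (List α)) (w : List α) :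
    (m.map (b :: ·)).count (a :: w) = 0 :=
  Multiset.count_eq_zero.2 fun hm => by
    obtain ⟨l, -, hl⟩ := Multiset.mem_map.1 hm
    exact h (List.cons_eq_cons.1 hl).1

theorem count_shuffles_cons_right {a : α} {u : List α} (h : a ∉ u) (v w : List α) :
    (shuffles u (a :: v)).count (a :: w) = (shuffles u v).count w := by
  cases u with
  | nil => simp [shuffles_nil_left, Multiset.count_singleton]
  | cons b u =>
    rw [shuffles, Multiset.count_add, count_cons_map_cons_of_ne (List.ne_of_not_mem_cons h).symm,
      count_cons_map_cons, zero_add]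

theorem count_shuffles_cons_left {a : α} {v : List α} (h : a ∉ v) (u w : List α) :
    (shuffles (a :: u) v).count (a :: w) = (shuffles u v).count w := by
  cases v with
  | nil => simp [shuffles_nil_right, Multiset.count_singleton]
  | cons b v =>
    rw [shuffles, Multiset.count_add, count_cons_map_cons_of_ne (List.ne_of_not_mem_cons h).symm,
      count_cons_map_cons, add_zero]

theorem count_shuffles_self_flatMap_pair {xs : List α} (h : xs.Nodup) :
    (shuffles xs xs).count (xs.flatMap fun a => [a, a]) = 2 ^ xs.length := by
  induction xs with
  | nil => simp [shuffles_nil_left]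
  | cons a t ih =>
    obtain ⟨hat, ht⟩ := List.nodup_cons.1 h
    rw [List.flatMap_cons, List.cons_append, List.singleton_append, shuffles,
      Multiset.count_add, count_cons_map_cons, count_cons_map_cons,
      count_shuffles_cons_right hat, count_shuffles_cons_left hat, ih ht, List.length_cons,
      pow_succ, mul_two]

end Shuffles

section ShuffleProduct

theorem ofMS_apply [DecidableEq α] (m : Multiset (List α)) (w : List α) :
    ofMS m w = m.count w := by
  induction m using Multiset.induction with
  | empty => simp [ofMS]
  | cons l m ih =>
    simp only [ofMS] at ih ⊢
    simp [ih, Multiset.count_cons, Finsupp.single_apply, eq_comm, add_comm]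

theorem sh_add_left (x y z : List α →₀ ℝ) : sh (x + y) z = sh x z + sh y z := by
  unfold sh
  apply Finsupp.sum_add_index' <;> intros <;> simp [add_mul, add_smul, Finsupp.sum_add]

theorem sh_add_right (x y z : List α →₀ ℝ) : sh x (y + z) = sh x y + sh x z := by
  unfold sh
  rw [← Finsupp.sum_add]
  refine Finsupp.sum_congr fun v _ => ?_
  apply Finsupp.sum_add_index' <;> intros <;> simp [mul_add, add_smul]

theorem sh_single_single (u v : List α) (a b : ℝ) :
    sh (Finsupp.single u a) (Finsupp.single v b) = (a * b) • ofMS (shuffles u v) := by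
  simp [sh, Finsupp.sum_single_index]

theorem sh_sum_left {ι : Type*} (s : Finset ι) (f : ι → List α →₀ ℝ) (y : List α →₀ ℝ) :
    sh (∑ i ∈ s, f i) y = ∑ i ∈ s, sh (f i) y :=
  map_sum (AddMonoidHom.mk' (sh · y) fun x x' => sh_add_left x x' y) f s

theorem sh_sum_right {ι : Type*} (x : List α →₀ ℝ) (s : Finset ι) (f : ι → List α →₀ ℝ) :
    sh x (∑ i ∈ s, f i) = ∑ i ∈ s, sh x (f i) :=
  map_sum (AddMonoidHom.mk' (sh x) (sh_add_right x)) f s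

theorem sh_multiset_sum_right (x : List α →₀ ℝ) (m : Multiset (List α →₀ ℝ)) :
    sh x m.sum = (m.map (sh x)).sum :=
  map_multiset_sum (AddMonoidHom.mk' (sh x) (sh_add_right x)) m

theorem sh_sum_single_sum_single_apply [DecidableEq α] {ι κ : Type*} (s : Finset ι)
    (t : Finset κ) (u : ι → List α) (a : ι → ℝ) (v : κ → List α) (b : κ → ℝ) (w : List α) :
    sh (∑ i ∈ s, Finsupp.single (u i) (a i)) (∑ j ∈ t, Finsupp.single (v j) (b j)) w =
      ∑ i ∈ s, ∑ j ∈ t, a i * b j * (shuffles (u i) (v j)).count w := by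
  rw [sh_sum_left, Finsupp.finsetSum_apply]
  simp only [sh_sum_right, sh_single_single, Finsupp.finsetSum_apply, Finsupp.smul_apply,
    ofMS_apply, smul_eq_mul]

/-- The words of `u₁ ⧢ u₂ ⧢ ⋯ ⧢ uₙ`, with multiplicity. -/
def mShuffles : List (List α) → Multiset (List α)
  | [] => {[]}
  | u :: L => (mShuffles L).bind (shuffles u)

theorem sh_single_ofMS (u : List α) (m : Multiset (List α)) :
    sh (Finsupp.single u 1) (ofMS m) = ofMS (m.bind (shuffles u)) := by
  simp only [ofMS, sh_multiset_sum_right, Multiset.map_map, Function.comp_def, sh_single_single,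
    one_mul, one_smul, Multiset.bind, Multiset.map_join, Multiset.sum_join]

theorem shProd_map_single (L : List (List α)) :
    shProd (L.map fun u => Finsupp.single u 1) = ofMS (mShuffles L) := by
  induction L with
  | nil => simp [shProd, mShuffles, ofMS]
  | cons u L ih => rw [List.map_cons, shProd, ih, sh_single_ofMS, mShuffles]

theorem sublist_of_mem_mShuffles {l : List α} {L : List (List α)} (h : l ∈ mShuffles L)
    {u : List α} (hu : u ∈ L) : u.Sublist l := by
  induction L generalizing l with
  | nil => simp at hu
  | cons v L ih =>
    obtain ⟨l', hl', hl⟩ := Multiset.mem_bind.1 h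
    obtain ⟨hv, hl'l, -⟩ := sublist_sublist_perm_of_mem_shuffles hl
    rcases List.mem_cons.1 hu with rfl | hu
    · exact hv
    · exact (ih hl' hu).trans hl'l

theorem perm_flatten_of_mem_mShuffles {l : List α} {L : List (List α)}
    (h : l ∈ mShuffles L) : l.Perm L.flatten := by
  induction L generalizing l with
  | nil => simp_all [mShuffles]
  | cons u L ih =>
    obtain ⟨l', hl', hl⟩ := Multiset.mem_bind.1 h
    exact (sublist_sublist_perm_of_mem_shuffles hl).2.2.trans ((ih hl').append_left u)

theorem count_mShuffles_map_pair_flatMap_pair [DecidableEq α] {xs : List α} (h : xs.Nodup) :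
    (mShuffles (xs.map fun a => [a, a])).count (xs.flatMap fun a => [a, a]) = 1 := by
  induction xs with
  | nil => simp [mShuffles]
  | cons a t ih =>
    obtain ⟨hat, ht⟩ := List.nodup_cons.1 h
    have hcount : ∀ v ∈ mShuffles (t.map fun a => [a, a]),
        (shuffles [a, a] v).count (a :: a :: t.flatMap fun a => [a, a]) =
          ({v} : Multiset (List α)).count (t.flatMap fun a => [a, a]) := by
      intro v hv
      have hav : a ∉ v := fun hav =>
        hat (by simpa using (perm_flatten_of_mem_mShuffles hv).subset hav)
      rw [count_shuffles_cons_left hav, count_shuffles_cons_left hav, shuffles_nil_left]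
    rw [List.map_cons, mShuffles, List.flatMap_cons, List.cons_append, List.cons_append,
      List.nil_append, Multiset.count_bind, Multiset.map_congr rfl hcount, ← Multiset.count_bind]
    erw [Multiset.bind_singleton _ id, Multiset.map_id, ih ht]

end ShuffleProduct

section Permutations

variable {β : Type*} [LinearOrder β]

theorem perm_eq_one_of_monotone [Finite β] {σ : Equiv.Perm β} (h : Monotone σ) : σ = 1 :=
  Equiv.ext fun _ => (h.strictMono_of_injective σ.injective).apply_eq

/-- If `σ x < x` were the least failure, `σ` would fix `σ x` as well, contradicting injectivity. -/
theorem perm_eq_one_of_forall_apply_le [WellFoundedLT β] {σ : Equiv.Perm β}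
    (h : ∀ x, σ x ≤ x) : σ = 1 := by
  ext x
  induction x using WellFoundedLT.induction with
  | _ x ih => exact (h x).lt_or_eq.resolve_left fun hlt => hlt.ne (σ.injective (ih _ hlt))

theorem pairwise_le_flatMap_pair {xs : List β} (h : xs.Pairwise (· ≤ ·)) :
    (xs.flatMap fun a => [a, a]).Pairwise (· ≤ ·) := by
  refine List.pairwise_flatMap.2 ⟨fun a _ => List.pairwise_pair.2 le_rfl, h.imp ?_⟩
  simp +contextual

theorem perm_eq_one_of_map_finRange_sublist {d : ℕ} {σ : Equiv.Perm (Fin d)}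
    {l : List (Fin d)} (hl : l.Pairwise (· ≤ ·)) (h : ((List.finRange d).map σ).Sublist l) :
    σ = 1 := by
  rw [← List.ofFn_eq_map] at h
  exact perm_eq_one_of_monotone (monotone_iff_forall_lt.2 (List.pairwise_ofFn.1 (hl.sublist h)))

end Permutations

section Word1122dd

variable {d : ℕ}

theorem invT1_eq_sum_single (d : ℕ) :
    invT1 d = ∑ σ : Equiv.Perm (Fin d),
      Finsupp.single ((List.finRange d).map σ) ((Equiv.Perm.sign σ : ℤ) : ℝ) := by
  refine Finset.sum_congr rfl fun σ _ => ?_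
  rw [Finsupp.smul_single, zsmul_eq_mul, mul_one]

theorem sh_invT1_invT1_apply (d : ℕ) (w : List (Fin d)) :
    sh (invT1 d) (invT1 d) w =
      ∑ σ : Equiv.Perm (Fin d), ∑ τ : Equiv.Perm (Fin d),
        ((Equiv.Perm.sign σ : ℤ) : ℝ) * ((Equiv.Perm.sign τ : ℤ) : ℝ) *
          (shuffles ((List.finRange d).map σ) ((List.finRange d).map τ)).count w := by
  rw [invT1_eq_sum_single, sh_sum_single_sum_single_apply]

theorem detSh_W_apply (d : ℕ) (w : List (Fin d)) :
    detSh (W d) w =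
      ∑ σ : Equiv.Perm (Fin d), ((Equiv.Perm.sign σ : ℤ) : ℝ) *
        (mShuffles ((List.finRange d).map fun i => [σ i, i])).count w := by
  rw [detSh, Finsupp.finsetSum_apply]
  refine Finset.sum_congr rfl fun σ _ => ?_
  have hW : ((List.finRange d).map fun i => W d (σ i) i) =
      ((List.finRange d).map fun i => [σ i, i]).map fun u => Finsupp.single u 1 := by
    rw [List.map_map]
    rfl
  rw [hW, shProd_map_single, Finsupp.smul_apply, ofMS_apply, zsmul_eq_mul]

theorem count_shuffles_map_finRange_eq_zero {σ τ : Equiv.Perm (Fin d)} (hστ : σ ≠ 1 ∨ τ ≠ 1)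
    {l : List (Fin d)} (hl : l.Pairwise (· ≤ ·)) :
    (shuffles ((List.finRange d).map σ) ((List.finRange d).map τ)).count l = 0 := by
  refine Multiset.count_eq_zero.2 fun hmem => ?_
  obtain ⟨hσ, hτ, -⟩ := sublist_sublist_perm_of_mem_shuffles hmem
  exact hστ.elim (· (perm_eq_one_of_map_finRange_sublist hl hσ))
    (· (perm_eq_one_of_map_finRange_sublist hl hτ))

theorem count_mShuffles_map_finRange_eq_zero {σ : Equiv.Perm (Fin d)} (hσ : σ ≠ 1)
    {l : List (Fin d)} (hl : l.Pairwise (· ≤ ·)) :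
    (mShuffles ((List.finRange d).map fun i => [σ i, i])).count l = 0 := by
  refine Multiset.count_eq_zero.2 fun hmem => hσ (perm_eq_one_of_forall_apply_le fun i => ?_)
  have hsub := sublist_of_mem_mShuffles hmem (List.mem_map_of_mem (List.mem_finRange i))
  exact List.pairwise_pair.1 (hl.sublist hsub)

end Word1122dd

theorem coeff_of_word_1122dd_general (d : ℕ) :
    (sh (invT1 d) (invT1 d)) ((List.finRange d).flatMap fun i => [i, i]) =
        2 ^ d ∧
      (detSh (W d)) ((List.finRange d).flatMap fun i => [i, i]) = 1 := by
  have hsorted : ((List.finRange d).flatMap fun i => [i, i]).Pairwise (· ≤ ·) :=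
    pairwise_le_flatMap_pair (List.pairwise_le_finRange d)
  constructor
  · rw [sh_invT1_invT1_apply, Fintype.sum_eq_single 1, Fintype.sum_eq_single 1]
    · simp [count_shuffles_self_flatMap_pair (List.nodup_finRange d)]
    · intro τ hτ
      rw [count_shuffles_map_finRange_eq_zero (Or.inr hτ) hsorted, Nat.cast_zero, mul_zero]
    · intro σ hσ
      refine Finset.sum_eq_zero fun τ _ => ?_
      rw [count_shuffles_map_finRange_eq_zero (Or.inl hσ) hsorted, Nat.cast_zero, mul_zero]
  · rw [detSh_W_apply, Fintype.sum_eq_single 1]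
    · simp [count_mShuffles_map_pair_flatMap_pair (List.nodup_finRange d)]
    · intro σ hσ
      rw [count_mShuffles_map_finRange_eq_zero hσ hsorted, Nat.cast_zero, mul_zero]

/-- the coefficient of the word `1122⋯dd` in
`inv(t_{1,d}) ⧢ inv(t_{1,d})` is `2^d`, and in `det_⧢(W_d)` it is `1`. -/
theorem coeff_of_word_1122dd (d : ℕ) (hd : 1 ≤ d) :
    (sh (invT1 d) (invT1 d)) ((List.finRange d).flatMap fun i => [i, i]) =
        2 ^ d ∧
      (detSh (W d)) ((List.finRange d).flatMap fun i => [i, i]) = 1 :=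
  coeff_of_word_1122dd_general d

end ShufflePaper
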